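/- Fix a segment t with a finite candidate set C_t ⊂ (t, t+1) and an integer k_t ≥ 0 with |C_t| ≥ k_t, and let Ŵ_t be the greedy committee for segment t. Then for every c ∈ K_t ∖ Ŵ_t and all integers r₁, r₂ ≥ 0, it holds that d⁺_{r₁}(c) + d⁻_{r₂}(c) ≤ 2(r₁ + r₂ + 1)/(k_t + 2). -/

import Mathlib

open MeasureTheory

/-- The distribution of the pair of endpoints `(X, Y)` of a random voter in the uniform
RIV model with `σ` segments and segment probabilities `p 1, …, p σ`: the mixture
`∑ t, p t • (U_{[t,t+1]} ⊗ U_{[t,t+1]})` where `U_I` is the uniform measure on `I`. -/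
noncomputable def rivMeasure (σ : ℕ) (p : ℕ → ℝ) : Measure (ℝ × ℝ) :=
  ∑ t ∈ Finset.Icc 1 σ,
    ENNReal.ofReal (p t) •
      ((volume.restrict (Set.Icc (t : ℝ) (t + 1))).prod
        (volume.restrict (Set.Icc (t : ℝ) (t + 1))))

/-- The `ξ`-th marked point of segment `t`: `t + (2ξ−1)/(2(k_t+2))`. -/
noncomputable def markedPoint (t kt : ℕ) (ξ : ℕ) : ℝ :=
  (t : ℝ) + (2 * (ξ : ℝ) - 1) / (2 * ((kt : ℝ) + 2))

/-- `w 2, …, w (kt+1)` is a greedy committee for segment `t` with candidate set `Ct`: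
for each `ξ = 2, …, kt+1`, `w ξ` is a candidate not chosen before that is closest to
the marked point `m_ξ` among all not-yet-chosen candidates. -/
def IsGreedyCommittee (t kt : ℕ) (Ct : Finset ℝ) (w : ℕ → ℝ) : Prop :=
  ∀ ξ ∈ Finset.Icc 2 (kt + 1),
    w ξ ∈ Ct ∧ w ξ ∉ (Finset.Icc 2 (ξ - 1)).image w ∧
      ∀ c' ∈ Ct, c' ∉ (Finset.Icc 2 (ξ - 1)).image w →
        |w ξ - markedPoint t kt ξ| ≤ |c' - markedPoint t kt ξ|

/-- `rank W c = ρ(c)`: the number of points of `W` strictly to the left of `c`. -/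
noncomputable def rank (W : Finset ℝ) (c : ℝ) : ℕ :=
  (W.filter (fun x => x < c)).card

/-- `dPlus t kt W c r = d⁺_r(c)`: the distance from `c` to the `(r+1)`-th element of `W`
to the right of `c` (elements of `W` listed in increasing order), or to the right
endpoint `t+1` of the segment if no such element exists. -/
noncomputable def dPlus (t kt : ℕ) (W : Finset ℝ) (c : ℝ) (r : ℕ) : ℝ :=
  if rank W c + r < kt then (W.sort (· ≤ ·)).getD (rank W c + r) 0 - c
  else ((t : ℝ) + 1) - c

/-- `dMinus t W c r = d⁻_r(c)`: the distance from `c` to the `(r+1)`-th element of `W`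
to the left of `c`, or to the left endpoint `t` of the segment if no such element exists. -/
noncomputable def dMinus (t : ℕ) (W : Finset ℝ) (c : ℝ) (r : ℕ) : ℝ :=
  if r + 1 ≤ rank W c then c - (W.sort (· ≤ ·)).getD (rank W c - r - 1) 0
  else c - (t : ℝ)

/-- The event that a voter with endpoint pair `xy` approves `c`, approves at most `r₁`
elements of `W` strictly to the left of `c`, and at most `r₂` elements of `W` strictly
to the right of `c` (the voter's approval interval is `[min xy, max xy]`). -/
def approvalEvent (W : Finset ℝ) (c : ℝ) (r₁ r₂ : ℕ) : Set (ℝ × ℝ) :=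
  {xy | (min xy.1 xy.2 ≤ c ∧ c ≤ max xy.1 xy.2) ∧
    (W.filter (fun x => x < c ∧ min xy.1 xy.2 ≤ x ∧ x ≤ max xy.1 xy.2)).card ≤ r₁ ∧
    (W.filter (fun x => c < x ∧ min xy.1 xy.2 ≤ x ∧ x ≤ max xy.1 xy.2)).card ≤ r₂}

/-- `segmentMiddle t kt Ct = K_t`: the candidates of `C_t` lying in
`(t + 3/(2(k_t+2)), t + 1 − 3/(2(k_t+2)))`. -/
noncomputable def segmentMiddle (t kt : ℕ) (Ct : Finset ℝ) : Finset ℝ :=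
  Ct.filter (fun x =>
    (t : ℝ) + 3 / (2 * ((kt : ℝ) + 2)) < x ∧ x < (t : ℝ) + 1 - 3 / (2 * ((kt : ℝ) + 2)))

/-!
Suppose `d⁺_{r₁}(c) + d⁻_{r₂}(c) > 2(r₁ + r₂ + 1)/(k + 2)`. Consecutive marked points are
`1/(k + 2)` apart, so the interval `(c - d⁻/2, c + d⁺/2)` contains at least `r₁ + r₂ + 1` of
them; since `c` stays `3/(2(k + 2))` away from the ends of the segment, this interval lies
between `m_1` and `m_{k+2}`, so these are marked points `m_ξ` with `2 ≤ ξ ≤ k + 1`.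
As `c` is never chosen, it is available at every greedy step, so `w_ξ` is at least as close to
`m_ξ` as `c` is, which puts `w_ξ` in `(c - d⁻, c) ∪ (c, c + d⁺)`. By the definition of `d^±`
this window holds at most `r₂ + r₁` committee members, a contradiction.
-/

open Finset

section Rank

variable {W : Finset ℝ}

lemma sort_getD_eq_orderEmbOfFin {i : ℕ} (hi : i < #W) :
    (W.sort (· ≤ ·)).getD i 0 = W.orderEmbOfFin rfl ⟨i, hi⟩ := by
  rw [orderEmbOfFin_apply, List.getD_eq_getElem _ _ (by simpa using hi)]
  rfl

lemma sort_getD_mem {i : ℕ} (hi : i < #W) : (W.sort (· ≤ ·)).getD i 0 ∈ W := by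
  rw [sort_getD_eq_orderEmbOfFin hi]
  exact orderEmbOfFin_mem W rfl _

lemma rank_map_univ {n : ℕ} (e : Fin n ↪o ℝ) (i : Fin n) :
    rank (univ.map e.toEmbedding) (e i) = i := by
  simp [rank, filter_map, filter_gt_eq_Iio]

lemma rank_orderEmbOfFin (i : Fin #W) : rank W (W.orderEmbOfFin rfl i) = i := by
  simpa only [map_orderEmbOfFin_univ] using rank_map_univ (W.orderEmbOfFin rfl) i

lemma rank_sort_getD {i : ℕ} (hi : i < #W) : rank W ((W.sort (· ≤ ·)).getD i 0) = i := by
  rw [sort_getD_eq_orderEmbOfFin hi, rank_orderEmbOfFin]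

lemma card_filter_Ioo_le_rank_sub (a b : ℝ) :
    #(W.filter fun x => a < x ∧ x < b) ≤ rank W b - rank W a := by
  rcases lt_or_ge b a with hba | hab
  · rw [filter_false_of_mem fun x _ h => (h.1.trans h.2).not_gt hba |>.elim]
    exact Nat.zero_le _
  · have hsub : W.filter (· < a) ⊆ W.filter (· < b) :=
      monotone_filter_right _ fun x _ hx => hx.trans_le hab
    rw [rank, rank, ← card_sdiff_of_subset hsub]
    refine card_le_card fun x hx => ?_
    simp only [mem_filter, mem_sdiff] at hx ⊢
    exact ⟨⟨hx.1, hx.2.2⟩, fun h => (h.2.trans hx.2.1).false⟩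

lemma card_filter_Ioo_le_rank_sub_one {a : ℝ} (ha : a ∈ W) (b : ℝ) :
    #(W.filter fun x => a < x ∧ x < b) ≤ rank W b - rank W a - 1 := by
  rcases le_or_gt b a with hba | hab
  · rw [filter_false_of_mem fun x _ h => (h.1.trans h.2).not_ge hba |>.elim]
    exact Nat.zero_le _
  · have hsub : insert a (W.filter (· < a)) ⊆ W.filter (· < b) := by
      refine insert_subset (mem_filter.2 ⟨ha, hab⟩) ?_
      exact monotone_filter_right _ fun x _ hx => hx.trans hab
    have hcard : #(insert a (W.filter (· < a))) = rank W a + 1 :=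
      card_insert_of_notMem (by simp)
    rw [Nat.sub_sub, ← hcard, rank, ← card_sdiff_of_subset hsub]
    refine card_le_card fun x hx => ?_
    simp only [mem_filter, mem_sdiff, mem_insert] at hx ⊢
    refine ⟨⟨hx.1, hx.2.2⟩, ?_⟩
    rintro (rfl | h)
    · exact hx.2.1.false
    · exact (h.2.trans hx.2.1).false

lemma rank_eq_card_of_forall_lt {b : ℝ} (hb : ∀ x ∈ W, x < b) : rank W b = #W :=
  congrArg card (filter_true_of_mem hb)

section Distances

variable {t kt : ℕ} {c : ℝ}

lemma dPlus_le (hW : ∀ x ∈ W, x < t + 1) (hcard : #W = kt) (r : ℕ) :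
    dPlus t kt W c r ≤ t + 1 - c := by
  unfold dPlus
  split_ifs with h
  · linarith [hW _ (sort_getD_mem (hcard ▸ h))]
  · rfl

lemma card_filter_Ioo_dPlus_le (hW : ∀ x ∈ W, x < t + 1) (hcard : #W = kt) (r : ℕ) :
    #(W.filter fun x => c < x ∧ x < c + dPlus t kt W c r) ≤ r := by
  unfold dPlus
  split_ifs with h
  · rw [add_sub_cancel]
    have := rank_sort_getD (hcard ▸ h)
    have := card_filter_Ioo_le_rank_sub (W := W) c ((W.sort (· ≤ ·)).getD (rank W c + r) 0)
    omega
  · rw [add_sub_cancel]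
    have := card_filter_Ioo_le_rank_sub (W := W) c (t + 1)
    rw [rank_eq_card_of_forall_lt hW] at this
    omega

lemma dMinus_le (hW : ∀ x ∈ W, (t : ℝ) < x) (r : ℕ) : dMinus t W c r ≤ c - t := by
  unfold dMinus
  split_ifs with h
  · have : rank W c - r - 1 < #W := by have : rank W c ≤ #W := card_filter_le W _; omega
    linarith [hW _ (sort_getD_mem this)]
  · rfl

lemma card_filter_Ioo_dMinus_le (r : ℕ) :
    #(W.filter fun x => c - dMinus t W c r < x ∧ x < c) ≤ r := by
  unfold dMinus
  split_ifs with h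
  · rw [sub_sub_cancel]
    have hj : rank W c - r - 1 < #W := by have : rank W c ≤ #W := card_filter_le W _; omega
    have := rank_sort_getD hj
    have := card_filter_Ioo_le_rank_sub_one (sort_getD_mem hj) c
    omega
  · rw [sub_sub_cancel]
    have := card_filter_Ioo_le_rank_sub (W := W) t c
    omega

end Distances

end Rank

section MarkedPoints

variable {t kt : ℕ}

lemma lt_markedPoint_iff {x : ℝ} {ξ : ℕ} :
    x < markedPoint t kt ξ ↔ (kt + 2) * (x - t) + 1 / 2 < ξ := by
  rw [markedPoint, ← sub_lt_iff_lt_add', lt_div_iff₀ (by positivity)]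
  constructor <;> intro h <;> linarith

lemma markedPoint_lt_iff {y : ℝ} {ξ : ℕ} :
    markedPoint t kt ξ < y ↔ (ξ : ℝ) < (kt + 2) * (y - t) + 1 / 2 := by
  rw [markedPoint, ← lt_sub_iff_add_lt', div_lt_iff₀ (by positivity)]
  constructor <;> intro h <;> linarith

lemma markedPoint_one : markedPoint t kt 1 = t + 1 / (2 * (kt + 2)) := by
  norm_num [markedPoint]

lemma markedPoint_add_two : markedPoint t kt (kt + 2) = t + 1 - 1 / (2 * (kt + 2)) := by
  rw [markedPoint]
  field_simp
  push_cast
  ring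

lemma exists_markedPoints_subset_Ioo (n : ℕ) {x y : ℝ}
    (hx : markedPoint t kt 1 ≤ x) (hy : y ≤ markedPoint t kt (kt + 2))
    (hxy : n / ((kt : ℝ) + 2) < y - x) :
    ∃ G ⊆ Icc 2 (kt + 1), #G = n ∧ ∀ ξ ∈ G, markedPoint t kt ξ ∈ Set.Ioo x y := by
  have ha : 1 ≤ (kt + 2) * (x - t) + 1 / 2 := by
    simpa using (lt_markedPoint_iff (ξ := 1)).not.1 hx.not_gt
  have hb : (kt + 2) * (y - t) + 1 / 2 ≤ kt + 2 := by
    simpa using (markedPoint_lt_iff (ξ := kt + 2)).not.1 hy.not_gt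
  have hab : (kt + 2) * (x - t) + 1 / 2 + n < (kt + 2) * (y - t) + 1 / 2 := by
    rw [div_lt_iff₀ (by positivity)] at hxy
    linarith
  set a := (kt + 2) * (x - t) + 1 / 2
  have hG : ∀ ξ ∈ Ioc ⌊a⌋₊ (⌊a⌋₊ + n), a < ξ ∧ (ξ : ℝ) < (kt + 2) * (y - t) + 1 / 2 := by
    intro ξ hξ
    obtain ⟨hξa, hξn⟩ := mem_Ioc.1 hξ
    have : (ξ : ℝ) ≤ ⌊a⌋₊ + n := by exact_mod_cast hξn
    exact ⟨Nat.lt_of_floor_lt hξa, by linarith [Nat.floor_le (by linarith : 0 ≤ a)]⟩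
  refine ⟨Ioc ⌊a⌋₊ (⌊a⌋₊ + n), fun ξ hξ => ?_, by simp, fun ξ hξ => ?_⟩
  · obtain ⟨h1, h2⟩ := hG ξ hξ
    have : 1 < ξ := by exact_mod_cast ha.trans_lt h1
    have : ξ < kt + 2 := by exact_mod_cast h2.trans_le hb
    exact mem_Icc.2 ⟨by omega, by omega⟩
  · obtain ⟨h1, h2⟩ := hG ξ hξ
    exact ⟨lt_markedPoint_iff.2 h1, markedPoint_lt_iff.2 h2⟩

end MarkedPoints

lemma mem_Ioo_or_mem_Ioo_of_abs_sub_le {v m c d₁ d₂ : ℝ} (h : |v - m| ≤ |c - m|) (hvc : v ≠ c)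
    (hm : m ∈ Set.Ioo (c - d₁ / 2) (c + d₂ / 2)) :
    v ∈ Set.Ioo (c - d₁) c ∨ v ∈ Set.Ioo c (c + d₂) := by
  obtain ⟨hm₁, hm₂⟩ := hm
  rcases le_total m c with hmc | hcm
  · rw [abs_of_nonneg (sub_nonneg.2 hmc), abs_le] at h
    exact Or.inl ⟨by linarith, lt_of_le_of_ne (by linarith) hvc⟩
  · rw [abs_of_nonpos (sub_nonpos.2 hcm), abs_le] at h
    exact Or.inr ⟨lt_of_le_of_ne (by linarith) hvc.symm, by linarith⟩

namespace IsGreedyCommittee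

variable {t kt : ℕ} {Ct : Finset ℝ} {w : ℕ → ℝ}

lemma injOn (hw : IsGreedyCommittee t kt Ct w) : Set.InjOn w (Icc 2 (kt + 1)) := by
  suffices ∀ ξ ∈ Icc 2 (kt + 1), ∀ ξ' ∈ Icc 2 (kt + 1), ξ' < ξ → w ξ ≠ w ξ' by
    intro ξ hξ ξ' hξ' he
    by_contra hne
    rcases lt_or_gt_of_ne hne with h | h
    · exact this ξ' hξ' ξ hξ h he.symm
    · exact this ξ hξ ξ' hξ' h he
  intro ξ hξ ξ' hξ' h he
  exact (hw ξ hξ).2.1 (mem_image.2 ⟨ξ', mem_Icc.2 ⟨(mem_Icc.1 hξ').1, by omega⟩, he.symm⟩)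

lemma card_image (hw : IsGreedyCommittee t kt Ct w) : #((Icc 2 (kt + 1)).image w) = kt := by
  rw [card_image_of_injOn hw.injOn, Nat.card_Icc]
  omega

lemma image_subset (hw : IsGreedyCommittee t kt Ct w) : (Icc 2 (kt + 1)).image w ⊆ Ct := by
  intro x hx
  obtain ⟨ξ, hξ, rfl⟩ := mem_image.1 hx
  exact (hw ξ hξ).1

lemma abs_sub_markedPoint_le (hw : IsGreedyCommittee t kt Ct w) {ξ : ℕ}
    (hξ : ξ ∈ Icc 2 (kt + 1)) {c : ℝ} (hc : c ∈ Ct) (hcw : c ∉ (Icc 2 (kt + 1)).image w) :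
    |w ξ - markedPoint t kt ξ| ≤ |c - markedPoint t kt ξ| := by
  refine (hw ξ hξ).2.2 c hc fun hc' => hcw ?_
  exact image_subset_image (Icc_subset_Icc_right (by have := mem_Icc.1 hξ; omega)) hc'

lemma le_card_filter_add_card_filter (hw : IsGreedyCommittee t kt Ct w) {c : ℝ} (hc : c ∈ Ct)
    (hcw : c ∉ (Icc 2 (kt + 1)).image w) {d₁ d₂ : ℝ} {n : ℕ}
    (h₁ : markedPoint t kt 1 ≤ c - d₁ / 2) (h₂ : c + d₂ / 2 ≤ markedPoint t kt (kt + 2))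
    (hn : n / ((kt : ℝ) + 2) < (d₁ + d₂) / 2) :
    n ≤ #(((Icc 2 (kt + 1)).image w).filter fun x => c - d₁ < x ∧ x < c) +
      #(((Icc 2 (kt + 1)).image w).filter fun x => c < x ∧ x < c + d₂) := by
  obtain ⟨G, hGsub, rfl, hGm⟩ :=
    exists_markedPoints_subset_Ioo n h₁ h₂ (by linarith : (n : ℝ) / (kt + 2) < _ - _)
  refine (card_le_card_of_injOn w (fun ξ hξ => ?_) (hw.injOn.mono (coe_subset.2 hGsub))).trans
    (card_union_le _ _)
  have hwξ : w ξ ∈ (Icc 2 (kt + 1)).image w := mem_image_of_mem w (hGsub hξ)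
  rw [coe_union, Set.mem_union, mem_coe, mem_coe, mem_filter, mem_filter]
  rcases mem_Ioo_or_mem_Ioo_of_abs_sub_le (hw.abs_sub_markedPoint_le (hGsub hξ) hc hcw)
    (ne_of_mem_of_not_mem hwξ hcw) (hGm ξ hξ) with h | h
  exacts [Or.inl ⟨hwξ, h⟩, Or.inr ⟨hwξ, h⟩]

end IsGreedyCommittee

theorem greedy_distance_bound_general
    (t : ℕ)
    (Ct : Finset ℝ) (hCt : ∀ x ∈ Ct, x ∈ Set.Ioo (t : ℝ) (t + 1))
    (kt : ℕ)
    (w : ℕ → ℝ) (hw : IsGreedyCommittee t kt Ct w)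
    (W : Finset ℝ) (hW : W = (Finset.Icc 2 (kt + 1)).image w)
    (c : ℝ) (hcK : c ∈ segmentMiddle t kt Ct) (hcW : c ∉ W)
    (r₁ r₂ : ℕ) :
    dPlus t kt W c r₁ + dMinus t W c r₂ ≤ 2 * ((r₁ : ℝ) + r₂ + 1) / ((kt : ℝ) + 2) := by
  obtain ⟨hcC, hcl, hcr⟩ := mem_filter.1 hcK
  have hWt x (hx : x ∈ W) := hCt x (hw.image_subset (hW ▸ hx))
  have hcard : #W = kt := hW ▸ hw.card_image
  have hdp := dPlus_le (c := c) (fun x hx => (hWt x hx).2) hcard r₁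
  have hdm := dMinus_le (c := c) (fun x hx => (hWt x hx).1) r₂
  by_contra! hlt
  have hε : 3 / (2 * ((kt : ℝ) + 2)) = 3 * (1 / (2 * (kt + 2))) := by ring
  have hε₀ : 0 < 1 / (2 * ((kt : ℝ) + 2)) := by positivity
  have := hw.le_card_filter_add_card_filter hcC (hW ▸ hcW) (n := r₁ + r₂ + 1)
    (d₁ := dMinus t W c r₂) (d₂ := dPlus t kt W c r₁)
    (by rw [markedPoint_one]; linarith) (by rw [markedPoint_add_two]; linarith)
    (by push_cast; linarith [mul_div_assoc (2 : ℝ) (r₁ + r₂ + 1) (kt + 2)])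
  rw [← hW] at this
  have := card_filter_Ioo_dMinus_le (t := t) (W := W) (c := c) r₂
  have := card_filter_Ioo_dPlus_le (c := c) (fun x hx => (hWt x hx).2) hcard r₁
  omega

/-- For a candidate `c ∈ K_t ∖ Ŵ_t` and all `r₁, r₂ ≥ 0`,
`d⁺_{r₁}(c) + d⁻_{r₂}(c) ≤ 2(r₁+r₂+1)/(k_t+2)`. -/
theorem greedy_distance_bound
    (t : ℕ)
    (Ct : Finset ℝ) (hCt : ∀ x ∈ Ct, x ∈ Set.Ioo (t : ℝ) (t + 1))
    (kt : ℕ) (hkt : kt ≤ Ct.card)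
    (w : ℕ → ℝ) (hw : IsGreedyCommittee t kt Ct w)
    (W : Finset ℝ) (hW : W = (Finset.Icc 2 (kt + 1)).image w)
    (c : ℝ) (hcK : c ∈ segmentMiddle t kt Ct) (hcW : c ∉ W)
    (r₁ r₂ : ℕ) :
    dPlus t kt W c r₁ + dMinus t W c r₂ ≤ 2 * ((r₁ : ℝ) + r₂ + 1) / ((kt : ℝ) + 2) :=
  greedy_distance_bound_general t Ct hCt kt w hw W hW c hcK hcW r₁ r₂
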